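/- ∫_0^∞ ∫_0^∞ e^{−x² − y²} cos(2xy) dx dy = π/(4√2). -/
import Mathlib


open MeasureTheory Set

open Complex in
lemma full_line_integral (y : ℝ) :
    ∫ x : ℝ, Real.exp (-x ^ 2 - y ^ 2) * Real.cos (2 * x * y)
      = Real.sqrt Real.pi * Real.exp (-2 * y ^ 2) := by
  have hb : (-1 : ℂ).re < 0 := by norm_num
  have h1 := integral_cexp_quadratic hb (2 * y * Complex.I) (-(y ^ 2 : ℂ))
  have h2 : ∀ x : ℝ, ((-1 : ℂ) * x ^ 2 + (2 * y * Complex.I) * x + (-(y ^ 2 : ℂ)))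
      = Complex.ofReal (-x ^ 2 - y ^ 2) + (2 * x * y) * Complex.I := by
    intro x; push_cast; ring
  simp_rw [h2] at h1
  have hint : Integrable (fun x : ℝ =>
      Complex.exp (Complex.ofReal (-x ^ 2 - y ^ 2) + (2 * x * y) * Complex.I)) := by
    have := integrable_cexp_quadratic' hb (2 * y * Complex.I) (-(y ^ 2 : ℂ))
    simpa only [h2] using this
  have h3 : ∀ x : ℝ, Real.exp (-x ^ 2 - y ^ 2) * Real.cos (2 * x * y)
      = (Complex.exp (Complex.ofReal (-x ^ 2 - y ^ 2) + (2 * x * y) * Complex.I)).re := by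
    intro x
    rw [Complex.exp_re]
    simp [← Complex.ofReal_pow]
  simp_rw [h3]
  have h4 := integral_re hint
  simp only [RCLike.re_to_complex] at h4
  rw [h4, h1]
  have e1 : (-(y ^ 2 : ℂ) - (2 * y * Complex.I) ^ 2 / (4 * (-1 : ℂ)))
      = Complex.ofReal (-2 * y ^ 2) := by
    push_cast
    rw [mul_pow, mul_pow, Complex.I_sq]
    ring
  have e2 : ((Real.pi : ℂ) / -(-1 : ℂ)) ^ (1 / 2 : ℂ) = (Real.sqrt Real.pi : ℂ) := by
    rw [neg_neg, div_one, Real.sqrt_eq_rpow, Complex.ofReal_cpow Real.pi_pos.le]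
    norm_num
  rw [e1, e2, ← Complex.ofReal_exp, ← Complex.ofReal_mul, Complex.ofReal_re]

theorem double_integral_exp_cos :
    ∫ y : ℝ in Ioi 0, ∫ x : ℝ in Ioi 0,
        Real.exp (-x ^ 2 - y ^ 2) * Real.cos (2 * x * y)
      = Real.pi / (4 * Real.sqrt 2) := by
  have inner : ∀ y : ℝ, ∫ x : ℝ in Ioi 0,
      Real.exp (-x ^ 2 - y ^ 2) * Real.cos (2 * x * y)
      = Real.sqrt Real.pi / 2 * Real.exp (-2 * y ^ 2) := by
    intro y
    have habs := integral_comp_abs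
      (f := fun x : ℝ => Real.exp (-x ^ 2 - y ^ 2) * Real.cos (2 * x * y))
    have heven : ∀ x : ℝ, Real.exp (-|x| ^ 2 - y ^ 2) * Real.cos (2 * |x| * y)
        = Real.exp (-x ^ 2 - y ^ 2) * Real.cos (2 * x * y) := by
      intro x
      rw [sq_abs, ← Real.cos_abs (2 * |x| * y), ← Real.cos_abs (2 * x * y),
        abs_mul, abs_mul, abs_mul, abs_abs, abs_mul]
    simp_rw [heven] at habs
    rw [full_line_integral y] at habs
    linarith
  simp_rw [inner]
  rw [integral_const_mul, integral_gaussian_Ioi 2]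
  rw [Real.sqrt_div Real.pi_pos.le]
  have hpi : Real.sqrt Real.pi * Real.sqrt Real.pi = Real.pi :=
    Real.mul_self_sqrt Real.pi_pos.le
  have h2 : Real.sqrt 2 ≠ 0 := by positivity
  rw [div_mul_div_comm, mul_div_assoc', hpi]
  rw [div_div]
  ring_nf
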